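/- arXiv:1311.6556 — 6 statements merged into one kernel-verified Lean document; each statement's English description precedes it below -/
import Mathlib

section
/- For every rejection cost d ∈ (0, 1/2), every slope parameter μ > 0, every bandwidth ρ ≥ 0 and every margin t ∈ ℝ, the double ramp loss upper-bounds the 0–d–1 loss: L_DR(t, ρ) ≥ L_{0-d-1}(t, ρ). -/
/-- The 0-d-1 loss on margin `t` with bandwidth `ρ` and rejection cost `d`. -/
noncomputable def L0d1 (d ρ t : ℝ) : ℝ :=
  if t < -ρ then 1 else if t ≤ ρ then d else 0

/-- The double ramp loss on margin `t` with rejection cost `d`, slope `μ`, bandwidth `ρ`. -/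
noncomputable def LDR (d μ ρ t : ℝ) : ℝ :=
  d / μ * (max 0 (μ - t + ρ) - max 0 (-μ^2 - t + ρ))
    + (1 - d) / μ * (max 0 (μ - t - ρ) - max 0 (-μ^2 - t - ρ))

lemma ramp_diff_nonneg (μ s : ℝ) (hμ : 0 < μ) :
    0 ≤ max 0 (μ - s) - max 0 (-μ^2 - s) := by
  have h : -μ^2 - s ≤ μ - s := by nlinarith
  have := max_le_max (le_refl (0:ℝ)) h
  linarith

lemma ramp_diff_ge (μ s : ℝ) (hμ : 0 < μ) (hs : s ≤ 0) :
    μ ≤ max 0 (μ - s) - max 0 (-μ^2 - s) := by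
  have h1 : max 0 (μ - s) = μ - s := max_eq_right (by linarith)
  have h2 : max 0 (-μ^2 - s) ≤ -s := max_le (by linarith) (by nlinarith)
  linarith

theorem stmt_0 (d μ ρ t : ℝ) (hd : d ∈ Set.Ioo (0 : ℝ) (1/2)) (hμ : 0 < μ)
    (hρ : 0 ≤ ρ) : L0d1 d ρ t ≤ LDR d μ ρ t := by
  obtain ⟨hd0, hd1⟩ := hd
  have key : ∀ c X : ℝ, 0 ≤ c → μ ≤ X → c ≤ c / μ * X := by
    intro c X hc hX
    rw [div_mul_eq_mul_div, le_div_iff₀ hμ]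
    nlinarith
  have nn : ∀ c X : ℝ, 0 ≤ c → 0 ≤ X → 0 ≤ c / μ * X := fun c X hc hX =>
    mul_nonneg (div_nonneg hc hμ.le) hX
  have A1 : 0 ≤ max 0 (μ - t + ρ) - max 0 (-μ^2 - t + ρ) := by
    have := ramp_diff_nonneg μ (t - ρ) hμ; ring_nf at this ⊢; linarith
  have A2 : 0 ≤ max 0 (μ - t - ρ) - max 0 (-μ^2 - t - ρ) := by
    have := ramp_diff_nonneg μ (t + ρ) hμ; ring_nf at this ⊢; linarith
  unfold L0d1 LDR
  split_ifs with h1 h2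
  · -- t < -ρ : both shifted margins ≤ 0
    have B1 : μ ≤ max 0 (μ - t + ρ) - max 0 (-μ^2 - t + ρ) := by
      have := ramp_diff_ge μ (t - ρ) hμ (by linarith)
      ring_nf at this ⊢; linarith
    have B2 : μ ≤ max 0 (μ - t - ρ) - max 0 (-μ^2 - t - ρ) := by
      have := ramp_diff_ge μ (t + ρ) hμ (by linarith)
      ring_nf at this ⊢; linarith
    have := key d _ hd0.le B1
    have := key (1 - d) _ (by linarith) B2
    linarith
  · -- -ρ ≤ t ≤ ρ
    have B1 : μ ≤ max 0 (μ - t + ρ) - max 0 (-μ^2 - t + ρ) := by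
      have := ramp_diff_ge μ (t - ρ) hμ (by linarith)
      ring_nf at this ⊢; linarith
    have := key d _ hd0.le B1
    have := nn (1 - d) _ (by linarith) A2
    linarith
  · have := nn d _ hd0.le A1
    have := nn (1 - d) _ (by linarith) A2
    linarith
end

section
/- Fix a rejection cost d ∈ (0, 1/2), a bandwidth ρ ≥ 0 and a margin t ∈ ℝ with t ≠ −ρ. Then the double ramp loss converges pointwise to the 0–d–1 loss as the slope parameter tends to zero: the limit of L_DR^μ(t, ρ) as μ → 0⁺ equals L_{0-d-1}(t, ρ). -/
/-!
The double ramp loss is `d · ramp μ (t - ρ) + (1 - d) · ramp μ (t + ρ)`, where `ramp μ a` rises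
from `0` to `1 + μ` as `a` decreases through `[-μ², μ]`. For `a ≤ 0` it is squeezed between `1`
and `1 + μ`; for `a > 0` it vanishes once `μ < a`. So each ramp tends to the indicator of
`a ≤ 0`, and the two indicators at `t ∓ ρ` recombine into the 0-d-1 loss exactly when
`t ≠ -ρ` (the jump of the second ramp) and `ρ ≥ 0` (so that the jumps come in the right order).
-/

open Filter Topology

noncomputable def ramp (μ a : ℝ) : ℝ :=
  (max 0 (μ - a) - max 0 (-μ ^ 2 - a)) / μ

lemma LDR_eq_ramp (d μ ρ t : ℝ) :
    LDR d μ ρ t = d * ramp μ (t - ρ) + (1 - d) * ramp μ (t + ρ) := by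
  simp only [LDR, ramp, sub_add, sub_sub]
  ring

lemma one_le_ramp {μ a : ℝ} (hμ : 0 < μ) (ha : a ≤ 0) : 1 ≤ ramp μ a := by
  rw [ramp, le_div_iff₀ hμ]
  have := le_max_left 0 (-μ ^ 2 - a)
  rw [max_eq_right (by linarith : 0 ≤ μ - a)]
  cases max_choice 0 (-μ ^ 2 - a) <;> nlinarith

lemma ramp_le_one_add {μ a : ℝ} (hμ : 0 < μ) (ha : a ≤ 0) : ramp μ a ≤ 1 + μ := by
  rw [ramp, div_le_iff₀ hμ, max_eq_right (by linarith : 0 ≤ μ - a)]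
  nlinarith [le_max_right 0 (-μ ^ 2 - a)]

lemma ramp_eq_zero {μ a : ℝ} (hμ : 0 < μ) (hμa : μ ≤ a) : ramp μ a = 0 := by
  rw [ramp, max_eq_left (by linarith), max_eq_left (by nlinarith), sub_zero, zero_div]

lemma tendsto_ramp_of_nonpos {a : ℝ} (ha : a ≤ 0) :
    Tendsto (ramp · a) (𝓝[>] 0) (𝓝 1) := by
  have h_upper : Tendsto (fun μ : ℝ => 1 + μ) (𝓝[>] 0) (𝓝 1) := by
    simpa using (tendsto_const_nhds.add tendsto_id : Tendsto (fun μ : ℝ => 1 + μ) (𝓝 0) _)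
      |>.mono_left nhdsWithin_le_nhds
  refine tendsto_of_tendsto_of_tendsto_of_le_of_le' tendsto_const_nhds h_upper ?_ ?_ <;>
    filter_upwards [self_mem_nhdsWithin] with μ (hμ : 0 < μ)
  exacts [one_le_ramp hμ ha, ramp_le_one_add hμ ha]

lemma tendsto_ramp_of_pos {a : ℝ} (ha : 0 < a) :
    Tendsto (ramp · a) (𝓝[>] 0) (𝓝 0) := by
  refine tendsto_const_nhds.congr' ?_
  filter_upwards [Ioo_mem_nhdsGT ha] with μ hμ
  exact (ramp_eq_zero hμ.1 hμ.2.le).symm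

lemma tendsto_ramp (a : ℝ) :
    Tendsto (ramp · a) (𝓝[>] 0) (𝓝 (if a ≤ 0 then 1 else 0)) := by
  split_ifs with ha
  exacts [tendsto_ramp_of_nonpos ha, tendsto_ramp_of_pos (not_le.1 ha)]

lemma L0d1_eq_indicators {d ρ t : ℝ} (hρ : 0 ≤ ρ) (ht : t ≠ -ρ) :
    L0d1 d ρ t =
      d * (if t - ρ ≤ 0 then 1 else 0) + (1 - d) * (if t + ρ ≤ 0 then 1 else 0) := by
  rcases ht.lt_or_gt with ht | ht
  · simp [L0d1, ht, show t - ρ ≤ 0 by linarith, show t + ρ ≤ 0 by linarith]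
  · simp only [L0d1, not_lt.2 ht.le, show ¬t + ρ ≤ 0 by linarith, sub_nonpos, if_false]
    split_ifs <;> ring

theorem stmt_1_general (d ρ t : ℝ) (hρ : 0 ≤ ρ)
    (ht : t ≠ -ρ) :
    Filter.Tendsto (fun μ : ℝ => LDR d μ ρ t)
      (nhdsWithin 0 (Set.Ioi 0)) (nhds (L0d1 d ρ t)) := by
  simp only [LDR_eq_ramp, L0d1_eq_indicators hρ ht]
  exact ((tendsto_ramp _).const_mul d).add ((tendsto_ramp _).const_mul (1 - d))

theorem stmt_1 (d ρ t : ℝ) (hd : d ∈ Set.Ioo (0 : ℝ) (1/2)) (hρ : 0 ≤ ρ)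
    (ht : t ≠ -ρ) :
    Filter.Tendsto (fun μ : ℝ => LDR d μ ρ t)
      (nhdsWithin 0 (Set.Ioi 0)) (nhds (L0d1 d ρ t)) :=
  stmt_1_general d ρ t hρ ht
end

section
/- For every rejection cost d ∈ (0, 1/2) and every bandwidth ρ with 0 ≤ ρ ≤ 1 − d, the generalized hinge loss upper-bounds the 0–d–1 loss: L_GH(t) ≥ L_{0-d-1}(t, ρ) for all margins t ∈ ℝ. -/
/-- The generalized hinge loss for rejection cost `d`. -/
noncomputable def LGH (d t : ℝ) : ℝ :=
  if t < 0 then 1 - ((1 - d) / d) * t else if t < 1 then 1 - t else 0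

theorem stmt_16 (d ρ : ℝ) (hd : d ∈ Set.Ioo (0 : ℝ) (1/2)) (hρ0 : 0 ≤ ρ)
    (hρ1 : ρ ≤ 1 - d) : ∀ t : ℝ, L0d1 d ρ t ≤ LGH d t := by
  obtain ⟨hd0, hd2⟩ := hd
  intro t
  unfold L0d1 LGH
  have hfrac : 0 ≤ (1 - d) / d := div_nonneg (by linarith) hd0.le
  split_ifs <;>
    first
      | linarith
      | nlinarith [mul_nonneg hfrac (show (0:ℝ) ≤ -t by linarith)]
end

section
/- For every rejection cost d ∈ (0, 1/2) and every bandwidth ρ > 1 − d, the generalized hinge loss fails to upper-bound the 0–d–1 loss: there exists a margin t ∈ ℝ with L_GH(t) < L_{0-d-1}(t, ρ). -/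
theorem stmt_17 (d ρ : ℝ) (hd : d ∈ Set.Ioo (0 : ℝ) (1/2)) (hρ : 1 - d < ρ) :
    ∃ t : ℝ, LGH d t < L0d1 d ρ t := by
  obtain ⟨hd0, hd2⟩ := hd
  have hρ0 : (0:ℝ) < ρ := by linarith
  rcases le_or_gt 1 ρ with h | h
  · refine ⟨1, ?_⟩
    rw [LGH, L0d1, if_neg (by norm_num), if_neg (by norm_num),
      if_neg (by linarith), if_pos h]
    exact hd0
  · refine ⟨ρ, ?_⟩
    rw [LGH, L0d1, if_neg (by linarith), if_pos h,
      if_neg (by linarith), if_pos le_rfl]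
    linarith
end

section
/- For every rejection cost d ∈ (0, 1/2) and every bandwidth ρ with (1 − H(d))/(1 − d) ≤ ρ ≤ (H(d) − d)/d, the double hinge loss upper-bounds the 0–d–1 loss: L_DH(t) ≥ L_{0-d-1}(t, ρ) for all margins t ∈ ℝ. -/
/-- Binary entropy `H(d)`. -/
noncomputable def Hent (d : ℝ) : ℝ := -d * Real.log d - (1 - d) * Real.log (1 - d)

/-- The double hinge loss for rejection cost `d`. -/
noncomputable def LDH (d t : ℝ) : ℝ :=
  max (-(1 - d) * t + Hent d) (max (-d * t + Hent d) 0)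

theorem stmt_18 (d ρ : ℝ) (hd : d ∈ Set.Ioo (0 : ℝ) (1/2))
    (hρ1 : (1 - Hent d) / (1 - d) ≤ ρ) (hρ2 : ρ ≤ (Hent d - d) / d) :
    ∀ t : ℝ, L0d1 d ρ t ≤ LDH d t := by
  obtain ⟨hd0, hdhalf⟩ := hd
  intro t
  have hd1 : (0:ℝ) < 1 - d := by linarith
  have h1 : 1 - Hent d ≤ (1 - d) * ρ := by
    have := (div_le_iff₀ hd1).mp hρ1; linarith
  have h2 : d * ρ ≤ Hent d - d := by
    have := (le_div_iff₀ hd0).mp hρ2; nlinarith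
  unfold L0d1 LDH
  split_ifs with ht1 ht2
  · -- t < -ρ : first branch ≥ 1
    have : (1:ℝ) ≤ -(1 - d) * t + Hent d := by nlinarith
    exact le_trans this (le_max_left _ _)
  · -- t ≤ ρ : middle branch ≥ d
    have : d ≤ -d * t + Hent d := by nlinarith
    exact le_trans this (le_trans (le_max_left _ _) (le_max_right _ _))
  · exact le_trans (le_max_right _ _) (le_max_right _ _)
end

section
/- For every rejection cost d ∈ (0, 1/2) and every bandwidth ρ ≥ 0 lying outside the interval [(1 − H(d))/(1 − d), (H(d) − d)/d] (i.e., ρ < (1 − H(d))/(1 − d) or ρ > (H(d) − d)/d), the double hinge loss fails to upper-bound the 0–d–1 loss: there exists a margin t ∈ ℝ with L_DH(t) < L_{0-d-1}(t, ρ). -/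
/- Both branches of the double hinge loss are lines through `(0, H(d))`; on `t ≤ 0` the steeper
one, of slope `-(1 - d)`, dominates, and on `t ≥ 0` the flatter one, of slope `-d`. The 0–d–1 loss
is `1` left of `-ρ`, and the steeper branch is still below `1` at `t = -m` whenever
`m < (1 - H(d))/(1 - d)`: so for `ρ` below that bound any `m` strictly between the two gives a
counterexample. At `t = ρ` the 0–d–1 loss is `d`, and the flatter branch is below `d` there
exactly when `ρ > (H(d) - d)/d`. -/

lemma L0d1_of_lt_neg {d ρ t : ℝ} (ht : t < -ρ) : L0d1 d ρ t = 1 := if_pos ht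

lemma L0d1_self {d ρ : ℝ} (hρ : 0 ≤ ρ) : L0d1 d ρ ρ = d := by
  have : ¬ ρ < -ρ := by linarith
  simp only [L0d1, this, le_refl, if_false, if_true]

lemma LDH_lt_iff {d t c : ℝ} :
    LDH d t < c ↔ -(1 - d) * t + Hent d < c ∧ -d * t + Hent d < c ∧ 0 < c := by
  simp only [LDH, max_lt_iff]

lemma LDH_neg_lt_one {d m : ℝ} (hd : d ≤ 1 / 2) (hm0 : 0 ≤ m)
    (hm : (1 - d) * m + Hent d < 1) : LDH d (-m) < 1 := by
  have hflat : d * m ≤ (1 - d) * m := mul_le_mul_of_nonneg_right (by linarith) hm0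
  refine LDH_lt_iff.2 ⟨?_, ?_, one_pos⟩ <;> linarith

lemma LDH_self_lt {d ρ : ℝ} (hd0 : 0 < d) (hd : d ≤ 1 / 2) (hρ0 : 0 ≤ ρ)
    (hρ : Hent d < d * (1 + ρ)) : LDH d ρ < d := by
  have hsteep : d * ρ ≤ (1 - d) * ρ := mul_le_mul_of_nonneg_right (by linarith) hρ0
  refine LDH_lt_iff.2 ⟨?_, ?_, hd0⟩ <;> linarith

theorem stmt_19 (d ρ : ℝ) (hd : d ∈ Set.Ioo (0 : ℝ) (1/2)) (hρ0 : 0 ≤ ρ)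
    (hρ : ρ < (1 - Hent d) / (1 - d) ∨ (Hent d - d) / d < ρ) :
    ∃ t : ℝ, LDH d t < L0d1 d ρ t := by
  obtain ⟨hd0, hd2⟩ := hd
  rcases hρ with hlow | hhigh
  · obtain ⟨m, hρm, hm⟩ := exists_between hlow
    refine ⟨-m, ?_⟩
    rw [L0d1_of_lt_neg (neg_lt_neg hρm)]
    refine LDH_neg_lt_one hd2.le (hρ0.trans hρm.le) ?_
    linarith [(lt_div_iff₀' (by linarith : (0 : ℝ) < 1 - d)).1 hm]
  · refine ⟨ρ, ?_⟩
    rw [L0d1_self hρ0]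
    refine LDH_self_lt hd0 hd2.le hρ0 ?_
    linarith [(div_lt_iff₀' hd0).1 hhigh]
end
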